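/- arXiv:1103.4497 — 3 statements merged into one kernel-verified Lean document; each statement's English description precedes it below -/
import Mathlib

section
/- Let p, q ≥ 0 and let h be the standard symmetric bilinear form of signature (p+1,q+1) on ℝ^{p+q+2}. Let v be a nonzero vector with h(v,v) = 0. If w₁, w₂ are vectors with h(w₁,w₁) = h(w₂,w₂) = 0 and h(v,w₁) = h(v,w₂), and neither w₁ nor w₂ is a scalar multiple of v, then there exists an isometry g of h with g v = v and g w₁ = w₂. -/
/-- The standard symmetric bilinear form of signature `(p,q)` on `ℝ^{p+q}`:
`h(v,w) = Σ_{i<p} vᵢwᵢ − Σ_{i≥p} vᵢwᵢ`. -/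
def stdForm (p q : ℕ) (v w : Fin (p + q) → ℝ) : ℝ :=
  ∑ i : Fin (p + q), (if (i : ℕ) < p then (1 : ℝ) else -1) * v i * w i

/-! When `h(v,w₁) ≠ 0`, the Eichler transformation `x ↦ x + h(v,x) u - (h(u,x) + h(u,u)/2 · h(v,x)) v`
with `u = (w₂ - w₁) / h(v,w₁)`, which is orthogonal to `v`, fixes `v` and sends `w₁` to `w₂`.
When `h(v,w₁) = 0`, the reflection in `a - b` interchanges null vectors `a, b` with `h(a,b) ≠ 0`
and fixes every vector pairing equally with them; this moves `w₁` to `w₂` directly if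
`h(w₁,w₂) ≠ 0`, and otherwise in two steps through a null vector `x ⊥ v` pairing nontrivially with
both, assembled (using nondegeneracy) from null vectors `y₁, y₂ ⊥ v` with `h(wᵢ,yᵢ) = 1`. -/

open LinearMap (BilinForm)

namespace LinearMap.BilinForm

variable {K V : Type*} [Field K] [AddCommGroup V] [Module K V] {B : BilinForm K V}

theorem injective_of_isOrthogonal (hB : B.SeparatingLeft) {f : V →ₗ[K] V}
    (hf : LinearMap.IsOrthogonal B f) : Function.Injective f := by
  rw [← LinearMap.ker_eq_bot, LinearMap.ker_eq_bot']
  intro x hx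
  exact hB x fun y => by rw [← hf, hx, LinearMap.map_zero, LinearMap.zero_apply]

noncomputable def IsometryEquiv.ofIsOrthogonal [FiniteDimensional K V] (hB : B.SeparatingLeft)
    (f : V →ₗ[K] V) (hf : LinearMap.IsOrthogonal B f) : B.IsometryEquiv B :=
  { LinearEquiv.ofInjectiveEndo f (injective_of_isOrthogonal hB hf) with map_app' := hf }

def StabilizerOrbitRel (B : BilinForm K V) (v a b : V) : Prop :=
  ∃ g : B.IsometryEquiv B, g v = v ∧ g a = b

theorem StabilizerOrbitRel.trans {v a b c : V} (hab : B.StabilizerOrbitRel v a b)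
    (hbc : B.StabilizerOrbitRel v b c) : B.StabilizerOrbitRel v a c := by
  obtain ⟨g, hgv, hga⟩ := hab
  obtain ⟨g', hg'v, hg'b⟩ := hbc
  exact ⟨g.trans g', (congrArg g' hgv).trans hg'v, (congrArg g' hga).trans hg'b⟩

noncomputable def reflection (hB : B.IsSymm) {d : V} (hd : B d d ≠ 0) : B.IsometryEquiv B :=
  { Module.reflection (x := d) (f := (2 / B d d) • B d) (by simp [hd]) with
    map_app' x y := by
      show B (Module.reflection _ x) (Module.reflection _ y) = B x y
      simp only [Module.reflection_apply, LinearMap.smul_apply, map_sub, map_smul,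
        LinearMap.sub_apply, smul_eq_mul]
      rw [hB.eq x d]
      field_simp
      ring }

theorem reflection_apply (hB : B.IsSymm) {d : V} (hd : B d d ≠ 0) (x : V) :
    reflection hB hd x = x - (2 / B d d * B d x) • d := rfl

theorem reflection_apply_of_apply_eq_zero (hB : B.IsSymm) {d x : V} (hd : B d d ≠ 0)
    (hx : B d x = 0) : reflection hB hd x = x := by
  simp [reflection_apply, hx]

theorem apply_sub_sub_of_isotropic (hB : B.IsSymm) {a b : V} (ha : B a a = 0) (hb : B b b = 0) :
    B (a - b) (a - b) = -2 * B a b := by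
  simp only [map_sub, LinearMap.sub_apply, ha, hb, hB.eq b a]
  ring

def eichler (B : BilinForm K V) (v u : V) : V →ₗ[K] V :=
  LinearMap.id + (B v).smulRight u - (B u + (B u u / 2) • B v).smulRight v

theorem eichler_apply (v u x : V) :
    eichler B v u x = x + B v x • u - (B u x + B u u / 2 * B v x) • v := rfl

theorem eichler_apply_self (hB : B.IsSymm) {v u : V} (hv : B v v = 0) (hvu : B v u = 0) :
    eichler B v u v = v := by
  simp [eichler_apply, hv, hB.eq u v, hvu]

theorem exists_apply_eq_zero_apply_eq_one [FiniteDimensional K V] (hB : B.Nondegenerate)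
    {v w : V} (hw : w ∉ K ∙ v) : ∃ y, B v y = 0 ∧ B w y = 1 := by
  obtain ⟨φ, hφw, hφspan⟩ := Submodule.exists_dual_map_eq_bot_of_notMem hw inferInstance
  have hφv : φ v = 0 :=
    (Submodule.mem_bot K).1 (hφspan ▸ Submodule.mem_map_of_mem (Submodule.mem_span_singleton_self v))
  have hy (x : V) : B x ((B.flip.toDual hB.flip).symm φ) = φ x :=
    apply_toDual_symm_apply (B := B.flip) φ x
  exact ⟨(φ w)⁻¹ • (B.flip.toDual hB.flip).symm φ, by simp [hy, hφv], by simp [hy, hφw]⟩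

variable [NeZero (2 : K)]

theorem reflection_sub_apply_left (hB : B.IsSymm) {a b : V} (ha : B a a = 0) (hb : B b b = 0)
    (hab : B (a - b) (a - b) ≠ 0) : reflection hB hab a = b := by
  have hab' : B a b ≠ 0 := fun h => hab (by rw [apply_sub_sub_of_isotropic hB ha hb, h, mul_zero])
  have hcoeff : 2 / B (a - b) (a - b) * B (a - b) a = 1 := by
    rw [apply_sub_sub_of_isotropic hB ha hb]
    simp only [map_sub, LinearMap.sub_apply, ha, hB.eq b a]
    field_simp
    ring
  rw [reflection_apply, hcoeff, one_smul, sub_sub_cancel]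

theorem stabilizerOrbitRel_of_apply_ne_zero (hB : B.IsSymm) {v a b : V} (ha : B a a = 0)
    (hb : B b b = 0) (hab : B a b ≠ 0) (hv : B v a = B v b) : B.StabilizerOrbitRel v a b := by
  have hd : B (a - b) (a - b) ≠ 0 := by
    rw [apply_sub_sub_of_isotropic hB ha hb]
    exact mul_ne_zero (neg_ne_zero.2 two_ne_zero) hab
  refine ⟨reflection hB hd, reflection_apply_of_apply_eq_zero hB hd ?_,
    reflection_sub_apply_left hB ha hb hd⟩
  rw [hB.eq, map_sub, hv, sub_self]

theorem isOrthogonal_eichler (hB : B.IsSymm) {v u : V} (hv : B v v = 0) (hvu : B v u = 0) :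
    LinearMap.IsOrthogonal B (eichler B v u) := by
  intro x y
  simp only [eichler_apply, map_add, map_sub, map_smul, LinearMap.add_apply, LinearMap.sub_apply,
    LinearMap.smul_apply, smul_eq_mul]
  rw [hB.eq x u, hB.eq x v, hB.eq u v, hv, hvu]
  field_simp
  ring

theorem eichler_apply_of_isotropic (hB : B.IsSymm) {v w₁ w₂ : V} (hw₁ : B w₁ w₁ = 0)
    (hw₂ : B w₂ w₂ = 0) (ht : B v w₁ ≠ 0) :
    eichler B v ((B v w₁)⁻¹ • (w₂ - w₁)) w₁ = w₂ := by
  set u := (B v w₁)⁻¹ • (w₂ - w₁)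
  have hcoeff : B u w₁ + B u u / 2 * B v w₁ = 0 := by
    simp only [u, map_smul, map_sub, LinearMap.smul_apply, LinearMap.sub_apply, smul_eq_mul, hw₁,
      hw₂, hB.eq w₂ w₁]
    field_simp
    ring
  rw [eichler_apply, hcoeff, zero_smul, sub_zero, smul_smul, mul_inv_cancel₀ ht, one_smul,
    add_sub_cancel]

variable [FiniteDimensional K V]

theorem stabilizerOrbitRel_of_pairing_ne_zero (hB : B.IsSymm) (hBn : B.Nondegenerate)
    {v w₁ w₂ : V} (hv : B v v = 0) (hw₁ : B w₁ w₁ = 0) (hw₂ : B w₂ w₂ = 0)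
    (hpair : B v w₁ = B v w₂) (ht : B v w₁ ≠ 0) : B.StabilizerOrbitRel v w₁ w₂ := by
  have hvu : B v ((B v w₁)⁻¹ • (w₂ - w₁)) = 0 := by simp [hpair]
  exact ⟨IsometryEquiv.ofIsOrthogonal hBn.1 _ (isOrthogonal_eichler hB hv hvu),
    eichler_apply_self hB hv hvu, eichler_apply_of_isotropic hB hw₁ hw₂ ht⟩

theorem exists_isotropic_apply_eq_zero_apply_eq_one (hB : B.IsSymm) (hBn : B.Nondegenerate)
    {v w : V} (hw : B w w = 0) (hvw : B v w = 0) (hwv : w ∉ K ∙ v) :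
    ∃ y, B y y = 0 ∧ B v y = 0 ∧ B w y = 1 := by
  obtain ⟨y, hvy, hwy⟩ := exists_apply_eq_zero_apply_eq_one hBn hwv
  refine ⟨y - (B y y / 2) • w, ?_, ?_, ?_⟩ <;>
    simp only [map_sub, map_smul, LinearMap.sub_apply, LinearMap.smul_apply, smul_eq_mul, hw,
      hvw, hvy, hwy, hB.eq y w]
  · field_simp
    ring
  · ring
  · ring

theorem exists_isotropic_apply_eq_zero_apply_ne_zero (hB : B.IsSymm) (hBn : B.Nondegenerate)
    {v w₁ w₂ : V} (hw₁ : B w₁ w₁ = 0) (hw₂ : B w₂ w₂ = 0) (hvw₁ : B v w₁ = 0) (hvw₂ : B v w₂ = 0)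
    (hw₁v : w₁ ∉ K ∙ v) (hw₂v : w₂ ∉ K ∙ v) (hw₁₂ : B w₁ w₂ = 0) :
    ∃ x, B x x = 0 ∧ B v x = 0 ∧ B w₁ x ≠ 0 ∧ B w₂ x ≠ 0 := by
  obtain ⟨y₁, hy₁, hvy₁, hw₁y₁⟩ := exists_isotropic_apply_eq_zero_apply_eq_one hB hBn hw₁ hvw₁ hw₁v
  obtain ⟨y₂, hy₂, hvy₂, hw₂y₂⟩ := exists_isotropic_apply_eq_zero_apply_eq_one hB hBn hw₂ hvw₂ hw₂v
  by_cases hw₁y₂ : B w₁ y₂ = 0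
  · by_cases hw₂y₁ : B w₂ y₁ = 0
    · refine ⟨y₁ + y₂ - B y₁ y₂ • w₁, ?_, ?_, ?_, ?_⟩ <;>
        simp only [map_add, map_sub, map_smul, LinearMap.add_apply, LinearMap.sub_apply,
          LinearMap.smul_apply, smul_eq_mul, hy₁, hy₂, hvy₁, hvy₂, hvw₁, hw₁, hw₁y₁, hw₂y₂, hw₁y₂,
          hw₂y₁, hw₁₂, hB.eq w₂ w₁, hB.eq y₁ w₁, hB.eq y₂ w₁, hB.eq y₂ y₁]
      · ring
      · ring
      · norm_num
      · norm_num
    · exact ⟨y₁, hy₁, hvy₁, by simp [hw₁y₁], hw₂y₁⟩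
  · exact ⟨y₂, hy₂, hvy₂, hw₁y₂, by simp [hw₂y₂]⟩

theorem stabilizerOrbitRel_of_pairing_eq_zero (hB : B.IsSymm) (hBn : B.Nondegenerate)
    {v w₁ w₂ : V} (hw₁ : B w₁ w₁ = 0) (hw₂ : B w₂ w₂ = 0) (hvw₁ : B v w₁ = 0) (hvw₂ : B v w₂ = 0)
    (hw₁v : w₁ ∉ K ∙ v) (hw₂v : w₂ ∉ K ∙ v) : B.StabilizerOrbitRel v w₁ w₂ := by
  by_cases hw₁₂ : B w₁ w₂ = 0
  · obtain ⟨x, hx, hvx, hw₁x, hw₂x⟩ :=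
      exists_isotropic_apply_eq_zero_apply_ne_zero hB hBn hw₁ hw₂ hvw₁ hvw₂ hw₁v hw₂v hw₁₂
    refine (stabilizerOrbitRel_of_apply_ne_zero hB hw₁ hx hw₁x (by rw [hvw₁, hvx])).trans
      (stabilizerOrbitRel_of_apply_ne_zero hB hx hw₂ ?_ (by rw [hvx, hvw₂]))
    rwa [hB.eq]
  · exact stabilizerOrbitRel_of_apply_ne_zero hB hw₁ hw₂ hw₁₂ (by rw [hvw₁, hvw₂])

theorem stabilizerOrbitRel_of_isotropic (hB : B.IsSymm) (hBn : B.Nondegenerate)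
    {v w₁ w₂ : V} (hv : B v v = 0) (hw₁ : B w₁ w₁ = 0) (hw₂ : B w₂ w₂ = 0)
    (hpair : B v w₁ = B v w₂) (hw₁v : w₁ ∉ K ∙ v) (hw₂v : w₂ ∉ K ∙ v) :
    B.StabilizerOrbitRel v w₁ w₂ := by
  by_cases ht : B v w₁ = 0
  · exact stabilizerOrbitRel_of_pairing_eq_zero hB hBn hw₁ hw₂ ht (hpair ▸ ht) hw₁v hw₂v
  · exact stabilizerOrbitRel_of_pairing_ne_zero hB hBn hv hw₁ hw₂ hpair ht

end LinearMap.BilinForm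

open LinearMap.BilinForm

noncomputable def stdBilinForm (p q : ℕ) : BilinForm ℝ (Fin (p + q) → ℝ) :=
  (Matrix.diagonal fun i : Fin (p + q) => if (i : ℕ) < p then (1 : ℝ) else -1).toBilin'

theorem stdBilinForm_apply (p q : ℕ) (x y : Fin (p + q) → ℝ) :
    stdBilinForm p q x y = stdForm p q x y := by
  simp only [stdBilinForm, Matrix.toBilin'_apply', Matrix.mulVec_diagonal, dotProduct, stdForm]
  exact Finset.sum_congr rfl fun i _ => by ring

theorem isSymm_stdBilinForm (p q : ℕ) : (stdBilinForm p q).IsSymm :=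
  Matrix.isSymm_toBilin'_iff_isSymm.2 (Matrix.isSymm_diagonal _)

theorem nondegenerate_stdBilinForm (p q : ℕ) : (stdBilinForm p q).Nondegenerate :=
  nondegenerate_toBilin'_of_det_ne_zero' _ <| by
    rw [Matrix.det_diagonal, Finset.prod_ne_zero_iff]
    intro i _
    split_ifs <;> norm_num

theorem null_stabiliser_transitive_general (p q : ℕ)
    (v w₁ w₂ : Fin ((p + 1) + (q + 1)) → ℝ)
    (hv : stdForm (p + 1) (q + 1) v v = 0)
    (hn₁ : stdForm (p + 1) (q + 1) w₁ w₁ = 0)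
    (hn₂ : stdForm (p + 1) (q + 1) w₂ w₂ = 0)
    (hpair : stdForm (p + 1) (q + 1) v w₁ = stdForm (p + 1) (q + 1) v w₂)
    (hm₁ : ¬∃ c : ℝ, w₁ = c • v) (hm₂ : ¬∃ c : ℝ, w₂ = c • v) :
    ∃ g : (Fin ((p + 1) + (q + 1)) → ℝ) ≃ₗ[ℝ] (Fin ((p + 1) + (q + 1)) → ℝ),
      (∀ x y, stdForm (p + 1) (q + 1) (g x) (g y) = stdForm (p + 1) (q + 1) x y) ∧
      g v = v ∧ g w₁ = w₂ := by
  have not_mem_span {w} (hw : ¬∃ c : ℝ, w = c • v) : w ∉ ℝ ∙ v := by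
    simpa [Submodule.mem_span_singleton, eq_comm] using hw
  simp only [← stdBilinForm_apply] at hv hn₁ hn₂ hpair ⊢
  obtain ⟨g, hgv, hgw⟩ := stabilizerOrbitRel_of_isotropic (isSymm_stdBilinForm _ _)
    (nondegenerate_stdBilinForm _ _) hv hn₁ hn₂ hpair (not_mem_span hm₁) (not_mem_span hm₂)
  exact ⟨g, fun x y => g.map_app y x, hgv, hgw⟩

/-- For the standard form `h` of signature `(p+1,q+1)` on `ℝ^{p+q+2}` and a nonzero null
vector `v`: if `w₁, w₂` are null vectors with `h(v,w₁) = h(v,w₂)` and neither is a scalar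
multiple of `v`, then some isometry of `h` fixes `v` and maps `w₁` to `w₂`. -/
theorem null_stabiliser_transitive (p q : ℕ)
    (v w₁ w₂ : Fin ((p + 1) + (q + 1)) → ℝ)
    (hv0 : v ≠ 0) (hv : stdForm (p + 1) (q + 1) v v = 0)
    (hn₁ : stdForm (p + 1) (q + 1) w₁ w₁ = 0)
    (hn₂ : stdForm (p + 1) (q + 1) w₂ w₂ = 0)
    (hpair : stdForm (p + 1) (q + 1) v w₁ = stdForm (p + 1) (q + 1) v w₂)
    (hm₁ : ¬∃ c : ℝ, w₁ = c • v) (hm₂ : ¬∃ c : ℝ, w₂ = c • v) :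
    ∃ g : (Fin ((p + 1) + (q + 1)) → ℝ) ≃ₗ[ℝ] (Fin ((p + 1) + (q + 1)) → ℝ),
      (∀ x y, stdForm (p + 1) (q + 1) (g x) (g y) = stdForm (p + 1) (q + 1) x y) ∧
      g v = v ∧ g w₁ = w₂ :=
  null_stabiliser_transitive_general p q v w₁ w₂ hv hn₁ hn₂ hpair hm₁ hm₂
end

section
/- Let p, q ≥ 0 and let h be the standard Hermitian form of signature (p,q) on ℂ^{p+q}. For nonzero vectors v, w ∈ ℂ^{p+q}, there exists a ℂ-linear automorphism g of ℂ^{p+q} preserving h (h(gx,gy) = h(x,y) for all x,y) with g(ℂv) = ℂw if and only if the real numbers h(v,v) and h(w,w) have the same sign (both positive, both zero, or both negative). In other words, the orbits of the unitary group of h on the space of complex lines are classified by the sign of the restriction of h to the line. -/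
/-- The standard Hermitian form of signature `(p,q)` on `ℂ^{p+q}`:
`h(v,w) = Σ_{i<p} conj(vᵢ)wᵢ − Σ_{i≥p} conj(vᵢ)wᵢ` (conjugate-linear in the first
argument; `h(v,v)` is always real). -/
noncomputable def stdHermForm (p q : ℕ) (v w : Fin (p + q) → ℂ) : ℂ :=
  ∑ i : Fin (p + q),
    (if (i : ℕ) < p then (1 : ℂ) else -1) * (starRingEnd ℂ) (v i) * w i

/-!
An isometry `g` with `g v = c • w` gives `h(v,v) = |c|² h(w,w)`, so the sign is invariant.
Conversely, rescaling `v` by a positive real reduces to `h(v,v) = h(w,w)`. If `h(v,w) ≠ 0`,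
multiplying `w` by a phase makes `h(v,w)` real and different from `h(v,v)`; then `v - w` is
anisotropic and the Hermitian reflection in `v - w` maps `v` to `w`. The same reflection works
when `h(v,w) = 0 ≠ h(v,v)`. Finally, orthogonal isotropic `v, w` are both joined to an isotropic
`z` pairing nontrivially with each of them, which exists by nondegeneracy.
-/

open RCLike ComplexConjugate

theorem sign_eq_sign_iff {α : Type*} [Zero α] [LinearOrder α] {a b : α} :
    SignType.sign a = SignType.sign b ↔
      (0 < a ∧ 0 < b) ∨ (a = 0 ∧ b = 0) ∨ (a < 0 ∧ b < 0) := by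
  rcases lt_trichotomy a 0 with ha | rfl | ha <;> rcases lt_trichotomy b 0 with hb | rfl | hb <;>
    simp [sign_pos, sign_neg, *, not_lt_of_gt, ne_of_lt, ne_of_gt]

theorem exists_pos_sq_mul_eq_of_sign_eq {a b : ℝ} (h : SignType.sign a = SignType.sign b) :
    ∃ t : ℝ, 0 < t ∧ t ^ 2 * a = b := by
  rcases eq_or_ne a 0 with rfl | ha
  · rw [sign_zero, eq_comm, sign_eq_zero_iff] at h
    exact ⟨1, one_pos, by simp [h]⟩
  have hba : 0 < b / a := by
    rcases ha.lt_or_gt with ha | ha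
    · rw [sign_neg ha, eq_comm, sign_eq_neg_one_iff] at h
      exact div_pos_of_neg_of_neg h ha
    · rw [sign_pos ha, eq_comm, sign_eq_one_iff] at h
      exact div_pos h ha
  exact ⟨√(b / a), Real.sqrt_pos.mpr hba, by rw [Real.sq_sqrt hba.le, div_mul_cancel₀ _ ha]⟩

theorem LinearMap.SeparatingLeft.exists_apply_ne_zero_and_apply_ne_zero {R₁ R₂ R M₁ M₂ M : Type*}
    [CommSemiring R₁] [CommSemiring R₂] [CommSemiring R] [AddCommMonoid M₁] [Module R₁ M₁]
    [AddCommMonoid M₂] [Module R₂ M₂] [AddCommMonoid M] [Module R M] {I₁ : R₁ →+* R}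
    {I₂ : R₂ →+* R} {B : M₁ →ₛₗ[I₁] M₂ →ₛₗ[I₂] M} (hB : B.SeparatingLeft) {v w : M₁}
    (hv : v ≠ 0) (hw : w ≠ 0) : ∃ z, B v z ≠ 0 ∧ B w z ≠ 0 := by
  obtain ⟨x, hx⟩ : ∃ x, B v x ≠ 0 := by
    by_contra! h
    exact hv (hB v h)
  obtain ⟨y, hy⟩ : ∃ y, B w y ≠ 0 := by
    by_contra! h
    exact hw (hB w h)
  by_cases hvy : B v y = 0
  · by_cases hwx : B w x = 0
    · exact ⟨x + y, by simpa [hvy], by simpa [hwx]⟩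
    · exact ⟨x, hx, hwx⟩
  · exact ⟨y, hvy, hy⟩

namespace LinearMap

variable {𝕜 M : Type*} [RCLike 𝕜] [AddCommGroup M] [Module 𝕜 M]

def LineCongruent (B : M →ₗ⋆[𝕜] M →ₗ[𝕜] 𝕜) (v w : M) : Prop :=
  ∃ g : M ≃ₗ[𝕜] M, (∀ x y, B (g x) (g y) = B x y) ∧ ∃ c : 𝕜, c ≠ 0 ∧ g v = c • w

variable {B : M →ₗ⋆[𝕜] M →ₗ[𝕜] 𝕜} {u v w z : M}

namespace LineCongruent

theorem trans (huv : LineCongruent B u v) (hvw : LineCongruent B v w) :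
    LineCongruent B u w := by
  obtain ⟨g, hg, c, hc, hgu⟩ := huv
  obtain ⟨h, hh, d, hd, hhv⟩ := hvw
  refine ⟨g.trans h, fun x y => by simp [hg, hh], c * d, mul_ne_zero hc hd, ?_⟩
  rw [LinearEquiv.trans_apply, hgu, map_smul, hhv, smul_smul]

theorem of_smul_left {t : 𝕜} (ht : t ≠ 0) (h : LineCongruent B (t • v) w) :
    LineCongruent B v w := by
  obtain ⟨g, hg, c, hc, hgv⟩ := h
  refine ⟨g, hg, t⁻¹ * c, mul_ne_zero (inv_ne_zero ht) hc, ?_⟩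
  rw [← smul_smul, ← hgv, map_smul, smul_smul, inv_mul_cancel₀ ht, one_smul]

theorem exists_pos_mul_eq (h : LineCongruent B v w) :
    ∃ k : ℝ, 0 < k ∧ B v v = k * B w w := by
  obtain ⟨g, hg, c, hc, hgv⟩ := h
  refine ⟨‖c‖ ^ 2, by positivity, ?_⟩
  rw [← hg, hgv]
  simp only [map_smulₛₗ, LinearMap.smul_apply, smul_eq_mul, RingHom.id_apply, ← mul_assoc,
    RCLike.mul_conj]
  push_cast; rfl

end LineCongruent

namespace IsSymm

variable (hB : B.IsSymm)
include hB

theorem ofReal_re_apply_self (x : M) : (re (B x x) : 𝕜) = B x x :=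
  RCLike.conj_eq_iff_re.mp (hB.eq x x)

theorem exists_reflection (hu : B u u ≠ 0) :
    ∃ g : M ≃ₗ[𝕜] M, (∀ x y, B (g x) (g y) = B x y) ∧
      ∀ x, g x = x - (2 * B u x / B u u) • u := by
  have h2 : ((2 / B u u) • B u) u = 2 := by simp [hu]
  refine ⟨Module.reflection h2, fun x y => ?_, fun x => ?_⟩
  · have hux : conj (B u x) = B x u := hB.eq u x
    have huu : conj (B u u) = B u u := hB.eq u u
    simp only [Module.reflection_apply, map_sub, map_smulₛₗ, LinearMap.sub_apply,
      LinearMap.smul_apply, smul_eq_mul, map_mul, map_div₀, map_ofNat, RingHom.id_apply, hux, huu]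
    field_simp
    ring
  · simp [Module.reflection_apply, mul_div_right_comm]

theorem exists_isometry_apply_eq (hvw : B v v = B w w) {t : ℝ} (ht : B v w = t)
    (hne : (t : 𝕜) ≠ B v v) :
    ∃ g : M ≃ₗ[𝕜] M, (∀ x y, B (g x) (g y) = B x y) ∧ g v = w := by
  have hwv : B w v = t := by rw [← hB.eq, ht, conj_ofReal]
  have huv : B (v - w) v = B v v - t := by simp [hwv]
  have huu : B (v - w) (v - w) = 2 * (B v v - t) := by
    simp only [map_sub, LinearMap.sub_apply, ht, hwv, ← hvw]; ring
  have hsub : B v v - t ≠ 0 := sub_ne_zero.mpr hne.symm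
  have huu0 : B (v - w) (v - w) ≠ 0 := huu ▸ mul_ne_zero two_ne_zero hsub
  obtain ⟨g, hg, hgx⟩ := hB.exists_reflection huu0
  refine ⟨g, hg, ?_⟩
  rw [hgx, huv, ← huu, div_self huu0, one_smul, sub_sub_cancel]

theorem lineCongruent_of_apply_ne_zero (hvw : B v v = B w w) (h : B v w ≠ 0) :
    LineCongruent B v w := by
  set b := B v w
  have hb : (‖b‖ : 𝕜) ≠ 0 := by simpa using h
  obtain ⟨ε, hε, hne⟩ : ∃ ε : ℝ, |ε| = 1 ∧ ((ε * ‖b‖ : ℝ) : 𝕜) ≠ B v v := by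
    by_cases hpos : ((1 * ‖b‖ : ℝ) : 𝕜) = B v v
    · refine ⟨-1, by simp, fun hneg => hb ?_⟩
      push_cast at hpos hneg
      linear_combination (hpos - hneg) / 2
    · exact ⟨1, by simp, hpos⟩
  set c : 𝕜 := ε * (conj b / ‖b‖)
  have hc : ‖c‖ = 1 := by simp [c, hε, h]
  have hcb : B v (c • w) = ((ε * ‖b‖ : ℝ) : 𝕜) := by
    simp only [map_smul, smul_eq_mul, c, b]
    rw [mul_assoc, div_mul_eq_mul_div, RCLike.conj_mul]
    push_cast
    field_simp
  have hcc : B v v = B (c • w) (c • w) := by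
    simp only [map_smulₛₗ, LinearMap.smul_apply, smul_eq_mul, RingHom.id_apply, ← mul_assoc,
      RCLike.mul_conj, hc, hvw]
    simp
  obtain ⟨g, hg, hgv⟩ := hB.exists_isometry_apply_eq hcc hcb hne
  exact ⟨g, hg, c, norm_ne_zero_iff.mp (hc ▸ one_ne_zero), hgv⟩

theorem exists_isotropic_add_smul (hv : B v v = 0) (hvz : B v z ≠ 0) :
    ∃ s : 𝕜, B (z + s • v) (z + s • v) = 0 := by
  refine ⟨-B z z / (2 * conj (B v z)), ?_⟩
  have hzv : B z v = conj (B v z) := (hB.eq v z).symm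
  have hzz : conj (B z z) = B z z := hB.eq z z
  have hvz' : conj (B v z) ≠ 0 := by simpa using hvz
  simp only [map_add, map_smulₛₗ, LinearMap.add_apply, LinearMap.smul_apply, smul_eq_mul,
    RingHom.id_apply, hv, hzv, map_div₀, map_neg, map_mul, RCLike.conj_conj, hzz, map_ofNat]
  field_simp
  ring

theorem lineCongruent_of_apply_self_eq (hsep : B.SeparatingLeft) (hv : v ≠ 0) (hw : w ≠ 0)
    (hvw : B v v = B w w) : LineCongruent B v w := by
  by_cases hb : B v w = 0
  swap
  · exact hB.lineCongruent_of_apply_ne_zero hvw hb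
  by_cases hr : B v v = 0
  · obtain ⟨z, hvz, hwz⟩ := hsep.exists_apply_ne_zero_and_apply_ne_zero hv hw
    obtain ⟨s, hs⟩ := hB.exists_isotropic_add_smul hr hvz
    have hwv : B w v = 0 := hB.eq_iff.mp hb
    have hvz' : B v (z + s • v) ≠ 0 := by simpa [hr] using hvz
    have hzw' : B (z + s • v) w ≠ 0 := by
      rw [Ne, hB.eq_iff]
      simpa [hwv] using hwz
    exact (hB.lineCongruent_of_apply_ne_zero (hr.trans hs.symm) hvz').trans
      (hB.lineCongruent_of_apply_ne_zero (hs.trans (hvw ▸ hr).symm) hzw')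
  · obtain ⟨g, hg, hgv⟩ := hB.exists_isometry_apply_eq hvw (t := 0) (by simp [hb])
      (by rw [ofReal_zero]; exact Ne.symm hr)
    exact ⟨g, hg, 1, one_ne_zero, by rw [hgv, one_smul]⟩

theorem apply_self_eq_zero_iff (x : M) : B x x = 0 ↔ re (B x x) = 0 :=
  ⟨fun h => by simp [h], fun h => by rw [← hB.ofReal_re_apply_self, h, ofReal_zero]⟩

theorem lineCongruent_iff_sign_eq (hsep : B.SeparatingLeft) (hv : v ≠ 0) (hw : w ≠ 0) :
    LineCongruent B v w ↔ SignType.sign (re (B v v)) = SignType.sign (re (B w w)) := by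
  constructor
  · intro h
    obtain ⟨k, hk, hkvw⟩ := h.exists_pos_mul_eq
    rw [hkvw, re_ofReal_mul, sign_mul, sign_pos hk, one_mul]
  · intro h
    obtain ⟨t, ht, hta⟩ := exists_pos_sq_mul_eq_of_sign_eq h
    have ht' : (t : 𝕜) ≠ 0 := ofReal_ne_zero.mpr ht.ne'
    refine LineCongruent.of_smul_left ht'
      (hB.lineCongruent_of_apply_self_eq hsep (smul_ne_zero ht' hv) hw ?_)
    rw [← hB.ofReal_re_apply_self w, ← hta, ofReal_mul, hB.ofReal_re_apply_self v]
    simp only [map_smulₛₗ, LinearMap.smul_apply, smul_eq_mul, RingHom.id_apply, conj_ofReal]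
    push_cast
    ring

end IsSymm

end LinearMap

section StdHermForm

variable (p q : ℕ)

noncomputable def stdHermSesqForm :
    (Fin (p + q) → ℂ) →ₗ⋆[ℂ] (Fin (p + q) → ℂ) →ₗ[ℂ] ℂ :=
  LinearMap.mk₂'ₛₗ (starRingEnd ℂ) (RingHom.id ℂ) (stdHermForm p q)
    (fun x y z => by
      simp only [stdHermForm, ← Finset.sum_add_distrib, Pi.add_apply, map_add, mul_add, add_mul])
    (fun a x y => by
      simp only [stdHermForm, smul_eq_mul, Finset.mul_sum, Pi.smul_apply, map_mul]
      exact Finset.sum_congr rfl fun i _ => by ring)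
    (fun x y z => by simp only [stdHermForm, ← Finset.sum_add_distrib, Pi.add_apply, mul_add])
    (fun a x y => by
      simp only [stdHermForm, smul_eq_mul, Finset.mul_sum, Pi.smul_apply, RingHom.id_apply]
      exact Finset.sum_congr rfl fun i _ => by ring)

theorem stdHermSesqForm_apply (v w : Fin (p + q) → ℂ) :
    stdHermSesqForm p q v w = stdHermForm p q v w := rfl

theorem isSymm_stdHermSesqForm : (stdHermSesqForm p q).IsSymm := by
  refine ⟨fun x y => ?_⟩
  simp only [stdHermSesqForm_apply, stdHermForm, map_sum, map_mul, Complex.conj_conj,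
    apply_ite (starRingEnd ℂ), map_one, map_neg]
  exact Finset.sum_congr rfl fun i _ => by ring

theorem separatingLeft_stdHermSesqForm : (stdHermSesqForm p q).SeparatingLeft := by
  intro x hx
  funext j
  have := hx (Pi.single j 1)
  simp only [stdHermSesqForm_apply, stdHermForm, Pi.single_apply, mul_ite, mul_one, mul_zero,
    Finset.sum_ite_eq', Finset.mem_univ, if_true] at this
  split_ifs at this <;> simpa using this

end StdHermForm

/-- For nonzero `v, w ∈ ℂ^{p+q}`, there is a `ℂ`-linear automorphism `g` preserving the
standard Hermitian form `h` of signature `(p,q)` with `g(ℂv) = ℂw` iff the real numbers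
`h(v,v)` and `h(w,w)` have the same sign: the orbits of the unitary group on complex
lines are classified by the sign of the restriction of `h` to the line. -/
theorem complex_line_orbits_classified_by_sign (p q : ℕ) (v w : Fin (p + q) → ℂ)
    (hv : v ≠ 0) (hw : w ≠ 0) :
    (∃ g : (Fin (p + q) → ℂ) ≃ₗ[ℂ] (Fin (p + q) → ℂ),
        (∀ x y, stdHermForm p q (g x) (g y) = stdHermForm p q x y) ∧
        ∃ c : ℂ, c ≠ 0 ∧ g v = c • w) ↔
      ((0 < (stdHermForm p q v v).re ∧ 0 < (stdHermForm p q w w).re) ∨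
       (stdHermForm p q v v = 0 ∧ stdHermForm p q w w = 0) ∨
       ((stdHermForm p q v v).re < 0 ∧ (stdHermForm p q w w).re < 0)) := by
  have hB := isSymm_stdHermSesqForm p q
  simp only [← stdHermSesqForm_apply, hB.apply_self_eq_zero_iff, ← RCLike.re_to_complex]
  rw [← sign_eq_sign_iff]
  exact hB.lineCongruent_iff_sign_eq (separatingLeft_stdHermSesqForm p q) hv hw
end

section
/- Let p, q ≥ 0 and let h be the standard Hermitian form of signature (p+1,q+1) on ℂ^{p+q+2}. Let v ∈ ℂ^{p+q+2} satisfy h(v,v) = −1. If u₁, u₂ are nonzero vectors with h(u₁,u₁) = h(u₂,u₂) = 0, h(v,u₁) ≠ 0 and h(v,u₂) ≠ 0, then there exists a ℂ-linear automorphism g of ℂ^{p+q+2} with h(gx,gy) = h(x,y) for all x,y, g v = v, and g(ℂu₁) = ℂu₂. In other words, the stabiliser of v in the unitary group of h acts transitively on the set of isotropic complex lines not contained in v^⊥. -/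
/-!
Normalise so that `h(v,uᵢ) = 1`; then `wᵢ = uᵢ + v` are unit vectors orthogonal to `v`, and it
suffices to map `w₁` to `w₂` by an isometry fixing `v`. For `x, y` with `h(x,x) = h(y,y)` the
unitary reflection `a ↦ a + μ h(z,a) z` in `z = x - y`, with `μ = -1/h(z,x)`, sends `x` to `y` and
fixes every `a` with `h(x,a) = h(y,a)`; it exists whenever `h(y,x) ≠ h(x,x)`, and otherwise
(when `h(x,x) ≠ 0`) one first reflects `x` to `-x`.
-/

open ComplexConjugate

namespace LinearMap

variable {𝕜 E : Type*} [RCLike 𝕜] [AddCommGroup E] [Module 𝕜 E] {B : E →ₗ⋆[𝕜] E →ₗ[𝕜] 𝕜}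

/-- The condition on `μ` says `|1 + μ B(z,z)| = 1`: for `B z z ≠ 0` this is a unitary
reflection in `z`, and for isotropic `z` a unitary transvection. -/
def unitaryReflection (B : E →ₗ⋆[𝕜] E →ₗ[𝕜] 𝕜) (z : E) (μ : 𝕜)
    (hμ : μ + conj μ + μ * conj μ * B z z = 0) : E ≃ₗ[𝕜] E where
  toFun x := x + (μ * B z x) • z
  invFun x := x + (conj μ * B z x) • z
  map_add' x y := by
    simp only [map_add]
    module
  map_smul' c x := by
    simp only [map_smul, smul_eq_mul, RingHom.id_apply]
    module
  left_inv x := by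
    have key : conj μ * (B z x + μ * B z x * B z z) = -(μ * B z x) := by
      linear_combination B z x * hμ
    simp only [map_add, map_smul, smul_eq_mul, key]
    module
  right_inv x := by
    have key : μ * (B z x + conj μ * B z x * B z z) = -(conj μ * B z x) := by
      linear_combination B z x * hμ
    simp only [map_add, map_smul, smul_eq_mul, key]
    module

theorem unitaryReflection_apply (z : E) (μ : 𝕜) (hμ : μ + conj μ + μ * conj μ * B z z = 0)
    (x : E) : unitaryReflection B z μ hμ x = x + (μ * B z x) • z :=
  rfl

theorem apply_unitaryReflection (hB : B.IsSymm) (z : E) (μ : 𝕜)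
    (hμ : μ + conj μ + μ * conj μ * B z z = 0) (x y : E) :
    B (unitaryReflection B z μ hμ x) (unitaryReflection B z μ hμ y) = B x y := by
  simp only [unitaryReflection_apply, map_add, map_smul, add_apply, map_smulₛₗ₂, smul_eq_mul,
    map_mul, ← hB.eq z x]
  linear_combination conj (B z x) * B z y * hμ

theorem exists_isometry_apply_eq (hB : B.IsSymm) {x y : E} (hxy : B x x = B y y)
    (hyx : B y x ≠ B x x) :
    ∃ g : E ≃ₗ[𝕜] E, (∀ a b, B (g a) (g b) = B a b) ∧ g x = y ∧
      ∀ w, B x w = B y w → g w = w := by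
  have hz : ∀ w, B (x - y) w = B x w - B y w := map_sub₂ B x y
  have hzx : B (x - y) x ≠ 0 := by
    rw [hz]
    exact sub_ne_zero.mpr hyx.symm
  have hzz : B (x - y) (x - y) = B (x - y) x + conj (B (x - y) x) := by
    rw [hB.eq, hz, hz, map_sub, map_sub, ← hB.eq y x]
    linear_combination -hxy
  have hμ : -(B (x - y) x)⁻¹ + conj (-(B (x - y) x)⁻¹)
      + -(B (x - y) x)⁻¹ * conj (-(B (x - y) x)⁻¹) * B (x - y) (x - y) = 0 := by
    have hconj_ne : conj (B (x - y) x) ≠ 0 := (map_ne_zero _).mpr hzx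
    simp only [map_neg, map_inv₀]
    field_simp
    linear_combination hzz
  refine ⟨unitaryReflection B (x - y) _ hμ, apply_unitaryReflection hB _ _ hμ, ?_,
    fun w hw => ?_⟩
  · rw [unitaryReflection_apply, neg_mul, inv_mul_cancel₀ hzx]
    simp
  · rw [unitaryReflection_apply, hz w, hw]
    simp

theorem exists_isometry_apply_eq_of_ne_zero (hB : B.IsSymm) {x y : E} (hxy : B x x = B y y)
    (hx : B x x ≠ 0) :
    ∃ g : E ≃ₗ[𝕜] E, (∀ a b, B (g a) (g b) = B a b) ∧ g x = y ∧
      ∀ w, B x w = 0 → B y w = 0 → g w = w := by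
  by_cases hyx : B y x = B x x
  · have hneg : B (-x) x ≠ B x x := by
      rw [map_neg₂]
      exact neg_ne_self.mpr hx
    obtain ⟨g₁, hg₁, hg₁x, hg₁w⟩ := exists_isometry_apply_eq hB (by simp) hneg
    have hneg' : B y (-x) ≠ B (-x) (-x) := by
      simpa [hyx] using neg_ne_self.mpr hx
    obtain ⟨g₂, hg₂, hg₂x, hg₂w⟩ := exists_isometry_apply_eq hB (by simpa using hxy) hneg'
    refine ⟨g₁.trans g₂, fun a b => by simp only [LinearEquiv.trans_apply, hg₁, hg₂],
      by simp [hg₁x, hg₂x], fun w hxw hyw => ?_⟩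
    rw [LinearEquiv.trans_apply, hg₁w w (by simp [hxw]), hg₂w w (by simp [hxw, hyw])]
  · obtain ⟨g, hg, hgx, hgw⟩ := exists_isometry_apply_eq hB hxy hyx
    exact ⟨g, hg, hgx, fun w hxw hyw => hgw w (hxw.trans hyw.symm)⟩

theorem exists_isometry_fixing_apply_eq_of_isotropic (hB : B.IsSymm) {v u₁ u₂ : E}
    (hv : B v v = -1) (hu₁ : B u₁ u₁ = 0) (hu₂ : B u₂ u₂ = 0) (hvu₁ : B v u₁ = 1)
    (hvu₂ : B v u₂ = 1) :
    ∃ g : E ≃ₗ[𝕜] E, (∀ a b, B (g a) (g b) = B a b) ∧ g v = v ∧ g u₁ = u₂ := by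
  have unit_of_isotropic :
      ∀ u, B u u = 0 → B v u = 1 → B (u + v) (u + v) = 1 ∧ B (u + v) v = 0 := by
    intro u hu hvu
    have huv : B u v = 1 := by rw [← hB.eq, hvu, map_one]
    simp only [map_add, add_apply, hu, hvu, huv, hv]
    constructor <;> ring
  obtain ⟨h₁, h₁v⟩ := unit_of_isotropic u₁ hu₁ hvu₁
  obtain ⟨h₂, h₂v⟩ := unit_of_isotropic u₂ hu₂ hvu₂
  obtain ⟨g, hg, hgu, hgw⟩ :=
    exists_isometry_apply_eq_of_ne_zero hB (h₁.trans h₂.symm) (h₁ ▸ one_ne_zero)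
  have hgv : g v = v := hgw v h₁v h₂v
  refine ⟨g, hg, hgv, ?_⟩
  simpa [hgv] using hgu

theorem exists_isometry_fixing_smul_eq_of_isotropic (hB : B.IsSymm) {v u₁ u₂ : E}
    (hv : B v v = -1) (hu₁ : B u₁ u₁ = 0) (hu₂ : B u₂ u₂ = 0) (hvu₁ : B v u₁ ≠ 0)
    (hvu₂ : B v u₂ ≠ 0) :
    ∃ g : E ≃ₗ[𝕜] E, (∀ a b, B (g a) (g b) = B a b) ∧ g v = v ∧
      ∃ c : 𝕜, c ≠ 0 ∧ g u₁ = c • u₂ := by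
  have normalize : ∀ u, B u u = 0 → B v u ≠ 0 →
      B ((B v u)⁻¹ • u) ((B v u)⁻¹ • u) = 0 ∧ B v ((B v u)⁻¹ • u) = 1 := by
    intro u hu hvu
    simp [hu, hvu]
  obtain ⟨h₁, hv₁⟩ := normalize u₁ hu₁ hvu₁
  obtain ⟨h₂, hv₂⟩ := normalize u₂ hu₂ hvu₂
  obtain ⟨g, hg, hgv, hgu⟩ := exists_isometry_fixing_apply_eq_of_isotropic hB hv h₁ h₂ hv₁ hv₂
  refine ⟨g, hg, hgv, B v u₁ * (B v u₂)⁻¹, mul_ne_zero hvu₁ (inv_ne_zero hvu₂), ?_⟩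
  rw [map_smul, inv_smul_eq_iff₀ hvu₁] at hgu
  rw [hgu, smul_smul]

end LinearMap

noncomputable def stdHermSesq (p q : ℕ) : (Fin (p + q) → ℂ) →ₗ⋆[ℂ] (Fin (p + q) → ℂ) →ₗ[ℂ] ℂ :=
  LinearMap.mk₂'ₛₗ (starRingEnd ℂ) (RingHom.id ℂ) (stdHermForm p q)
    (fun x y z => by simp [stdHermForm, mul_add, add_mul, Finset.sum_add_distrib])
    (fun c x y => by
      simp only [stdHermForm, Finset.mul_sum, Pi.smul_apply, smul_eq_mul, map_mul]
      exact Finset.sum_congr rfl fun i _ => by ring)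
    (fun x y z => by simp [stdHermForm, mul_add, Finset.sum_add_distrib])
    (fun c x y => by
      simp only [stdHermForm, Finset.mul_sum, Pi.smul_apply, smul_eq_mul, RingHom.id_apply]
      exact Finset.sum_congr rfl fun i _ => by ring)

theorem isSymm_stdHermSesq (p q : ℕ) : (stdHermSesq p q).IsSymm := by
  refine ⟨fun x y => ?_⟩
  simp only [stdHermSesq, LinearMap.mk₂'ₛₗ_apply, stdHermForm, map_sum, map_mul,
    Complex.conj_conj]
  refine Finset.sum_congr rfl fun i _ => ?_
  split_ifs <;> simp <;> ring

theorem stabiliser_transitive_on_transversal_isotropic_lines_general (p q : ℕ)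
    (v u₁ u₂ : Fin ((p + 1) + (q + 1)) → ℂ)
    (hv : stdHermForm (p + 1) (q + 1) v v = -1)
    (hn₁ : stdHermForm (p + 1) (q + 1) u₁ u₁ = 0)
    (hn₂ : stdHermForm (p + 1) (q + 1) u₂ u₂ = 0)
    (ht₁ : stdHermForm (p + 1) (q + 1) v u₁ ≠ 0)
    (ht₂ : stdHermForm (p + 1) (q + 1) v u₂ ≠ 0) :
    ∃ g : (Fin ((p + 1) + (q + 1)) → ℂ) ≃ₗ[ℂ] (Fin ((p + 1) + (q + 1)) → ℂ),
      (∀ x y, stdHermForm (p + 1) (q + 1) (g x) (g y) =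
        stdHermForm (p + 1) (q + 1) x y) ∧
      g v = v ∧ ∃ c : ℂ, c ≠ 0 ∧ g u₁ = c • u₂ :=
  LinearMap.exists_isometry_fixing_smul_eq_of_isotropic (isSymm_stdHermSesq (p + 1) (q + 1))
    hv hn₁ hn₂ ht₁ ht₂

/-- For the standard Hermitian form `h` of signature `(p+1,q+1)` on `ℂ^{p+q+2}` and a
vector `v` with `h(v,v) = −1`: if `u₁, u₂` are nonzero null vectors with `h(v,u₁) ≠ 0`
and `h(v,u₂) ≠ 0`, then some `ℂ`-linear automorphism preserving `h` fixes `v` and maps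
the line `ℂu₁` onto the line `ℂu₂`; i.e. the stabiliser of `v` in the unitary group acts
transitively on isotropic complex lines not contained in `v^⊥`. -/
theorem stabiliser_transitive_on_transversal_isotropic_lines (p q : ℕ)
    (v u₁ u₂ : Fin ((p + 1) + (q + 1)) → ℂ)
    (hv : stdHermForm (p + 1) (q + 1) v v = -1)
    (hu₁ : u₁ ≠ 0) (hu₂ : u₂ ≠ 0)
    (hn₁ : stdHermForm (p + 1) (q + 1) u₁ u₁ = 0)
    (hn₂ : stdHermForm (p + 1) (q + 1) u₂ u₂ = 0)
    (ht₁ : stdHermForm (p + 1) (q + 1) v u₁ ≠ 0)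
    (ht₂ : stdHermForm (p + 1) (q + 1) v u₂ ≠ 0) :
    ∃ g : (Fin ((p + 1) + (q + 1)) → ℂ) ≃ₗ[ℂ] (Fin ((p + 1) + (q + 1)) → ℂ),
      (∀ x y, stdHermForm (p + 1) (q + 1) (g x) (g y) =
        stdHermForm (p + 1) (q + 1) x y) ∧
      g v = v ∧ ∃ c : ℂ, c ≠ 0 ∧ g u₁ = c • u₂ :=
  stabiliser_transitive_on_transversal_isotropic_lines_general p q v u₁ u₂ hv hn₁ hn₂ ht₁ ht₂
end
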